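/- Let Φ be a reduced crystallographic root system in a finite-dimensional real inner product space V with positive system Φ⁺ and Weyl group W, and assume no irreducible component of Φ is of type G₂. For w ∈ W, let E(w) = {α ∈ Φ⁺ : s_α ≤ w}, where s_α is the reflection in α and ≤ is the Bruhat order on W. Suppose the Poincaré polynomial P_w(t) = ∑_{x ≤ w} t^{ℓ(x)} is palindromic. Then the following are equivalent: (1) E(w) is closed under subtraction of positive roots, i.e. α ∈ E(w), β ∈ Φ⁺, α − β ∈ Φ⁺ imply α − β ∈ E(w); (2) every positive root in the convex hull of E(w) belongs to E(w), i.e. Φ⁺ ∩ conv(E(w)) ⊆ E(w). -/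

import Mathlib

/-!
Main combinatorial theorem of the paper: let `Φ` be a reduced crystallographic root
system, without `G₂` components, in a finite-dimensional real inner product space,
with positive system `Φ⁺` and Weyl group `W`.  For `w ∈ W` with palindromic Poincaré
polynomial `P_w(t) = ∑_{x ≤ w} t^{ℓ(x)}`, the set `E(w) = {α ∈ Φ⁺ : s_α ≤ w}` is
closed under subtraction of positive roots if and only if every positive root in the
convex hull of `E(w)` belongs to `E(w)`.
-/

open scoped RealInnerProductSpace

/-- `Φ` is a reduced crystallographic root system in the real inner product space `V`. -/
structure IsReducedCrystallographicRootSystem {V : Type*} [NormedAddCommGroup V]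
    [InnerProductSpace ℝ V] (Φ : Set V) : Prop where
  finite : Φ.Finite
  ne_zero : ∀ α ∈ Φ, α ≠ (0 : V)
  span : Submodule.span ℝ Φ = ⊤
  reflection_mem : ∀ α ∈ Φ, ∀ β ∈ Φ, β - (2 * ⟪β, α⟫ / ⟪α, α⟫) • α ∈ Φ
  crystallographic : ∀ α ∈ Φ, ∀ β ∈ Φ, ∃ n : ℤ, (n : ℝ) = 2 * ⟪β, α⟫ / ⟪α, α⟫
  reduced : ∀ α ∈ Φ, ∀ c : ℝ, c • α ∈ Φ → c = 1 ∨ c = -1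

/-- `P` is a (choice of) positive system for `Φ`. -/
def IsPositiveSystem {V : Type*} [NormedAddCommGroup V] [InnerProductSpace ℝ V]
    (Φ P : Set V) : Prop :=
  P ⊆ Φ ∧ ∃ f : V →ₗ[ℝ] ℝ, (∀ α ∈ Φ, f α ≠ 0) ∧ P = {α ∈ Φ | 0 < f α}

/-- No irreducible component of `Φ` has type `G₂`: equivalently (for a reduced
crystallographic root system) no pair of roots has product of Cartan integers `3`. -/
def HasNoG2Component {V : Type*} [NormedAddCommGroup V] [InnerProductSpace ℝ V]
    (Φ : Set V) : Prop :=
  ∀ α ∈ Φ, ∀ β ∈ Φ, (2 * ⟪α, β⟫ / ⟪β, β⟫) * (2 * ⟪β, α⟫ / ⟪α, α⟫) ≠ 3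

/-- The Weyl group of `Φ`: the subgroup of linear automorphisms of `V` generated by the
reflections `s_α`, `α ∈ Φ`. -/
def weylGroup {V : Type*} [NormedAddCommGroup V] [InnerProductSpace ℝ V] (Φ : Set V) :
    Subgroup (V ≃ₗ[ℝ] V) :=
  Subgroup.closure {g | ∃ α ∈ Φ, ∀ v : V, g v = v - (2 * ⟪v, α⟫ / ⟪α, α⟫) • α}

/-- `t` is the reflection `s_α` in the root `α`. -/
def IsReflectionIn {V : Type*} [NormedAddCommGroup V] [InnerProductSpace ℝ V]
    {Φ : Set V} (t : weylGroup Φ) (α : V) : Prop :=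
  α ∈ Φ ∧ ∀ v : V, (t : V ≃ₗ[ℝ] V) v = v - (2 * ⟪v, α⟫ / ⟪α, α⟫) • α

/-- The length of `w` relative to the positive system `Pos`: the number of positive
roots sent to negative roots, which is the Coxeter length of `w` with respect to the
simple reflections determined by `Pos`. -/
noncomputable def weylLength {V : Type*} [NormedAddCommGroup V] [InnerProductSpace ℝ V]
    {Φ : Set V} (Pos : Set V) (w : weylGroup Φ) : ℕ :=
  {α ∈ Pos | (w : V ≃ₗ[ℝ] V) α ∉ Pos}.ncard

/-- The Bruhat order on the Weyl group: the partial order generated by `x < t * x`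
whenever `t` is a reflection and `ℓ(x) < ℓ(t * x)`. -/
def bruhatLE {V : Type*} [NormedAddCommGroup V] [InnerProductSpace ℝ V]
    {Φ : Set V} (Pos : Set V) : weylGroup Φ → weylGroup Φ → Prop :=
  Relation.ReflTransGen (fun x y => ∃ t : weylGroup Φ, (∃ α, IsReflectionIn t α) ∧
    y = t * x ∧ weylLength Pos x < weylLength Pos y)

/-- `E(w) = {α ∈ Φ⁺ : s_α ≤ w}`, the set of positive roots whose reflection lies below
`w` in the Bruhat order. -/
def ESet {V : Type*} [NormedAddCommGroup V] [InnerProductSpace ℝ V]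
    {Φ : Set V} (Pos : Set V) (w : weylGroup Φ) : Set V :=
  {α ∈ Pos | ∃ t : weylGroup Φ, IsReflectionIn t α ∧ bruhatLE Pos t w}

/-- The Poincaré polynomial `P_w(t) = ∑_{x ≤ w} t^{ℓ(x)}` is palindromic: its
coefficient of `t^k` (the number of `x ≤ w` with `ℓ(x) = k`) equals its coefficient of
`t^{ℓ(w) - k}` for all `0 ≤ k ≤ ℓ(w)`. -/
def PoincarePalindromic {V : Type*} [NormedAddCommGroup V] [InnerProductSpace ℝ V]
    {Φ : Set V} (Pos : Set V) (w : weylGroup Φ) : Prop :=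
  ∀ k ≤ weylLength Pos w,
    {x : weylGroup Φ | bruhatLE Pos x w ∧ weylLength Pos x = k}.ncard =
      {x : weylGroup Φ | bruhatLE Pos x w ∧ weylLength Pos x = weylLength Pos w - k}.ncard

/-!
(1) ⇒ (2): let `γ ∈ Φ⁺ ∩ conv E(w)` with `γ ∉ E(w)`. For `z ∈ E(w)`, closure under subtraction
forbids `z - γ ∈ Φ⁺`, and the rank-two analysis of the pair `γ, z` (no `G₂`) gives either
`⟪γ, z⟫ < ⟪γ, γ⟫`, or `⟪γ, z⟫ = ⟪γ, γ⟫` with `γ - z ∈ Φ⁺`, so that `f z < f γ` for a linear form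
`f` positive on `Φ⁺`. Thus `E(w)` lies in a lexicographic open half-space, a convex set that
misses `γ`, although it contains `conv E(w)`.

(2) ⇒ (1): write `α = β + γ` with `β, γ ∈ Φ⁺`. Right multiplication by `s_η` raises the length
of `x` whenever `x η > 0`, which gives Bruhat steps `x < x s_η`. The rank-two classification of
`β, γ` (no `G₂`) provides a chain of two such steps from `s_γ` to `s_α`, except when `β ⊥ γ`,
`|β| = |γ|` and `γ - β > 0`; then a chain reaches `s_α` from `s_{γ - β}`, so `γ - β ∈ E(w)`, and
`γ` is the midpoint of `α` and `γ - β`.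
-/

section Reflection

variable {V : Type*} [NormedAddCommGroup V] [InnerProductSpace ℝ V]

noncomputable def rootReflectionₗ (δ : V) : V →ₗ[ℝ] V :=
  LinearMap.id - (innerₛₗ ℝ δ).smulRight ((2 / ⟪δ, δ⟫) • δ)

lemma rootReflectionₗ_apply (δ v : V) :
    rootReflectionₗ δ v = v - (2 * ⟪v, δ⟫ / ⟪δ, δ⟫) • δ := by
  simp [rootReflectionₗ, smul_smul, real_inner_comm δ v, mul_div_assoc', mul_comm]

lemma rootReflectionₗ_involutive (δ : V) : Function.Involutive (rootReflectionₗ δ) := by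
  intro v
  rcases eq_or_ne δ 0 with rfl | hδ
  · simp [rootReflectionₗ_apply]
  · have : ⟪δ, δ⟫ ≠ 0 := inner_self_ne_zero.mpr hδ
    simp only [rootReflectionₗ_apply, inner_sub_left, real_inner_smul_left]
    rw [show 2 * (⟪v, δ⟫ - 2 * ⟪v, δ⟫ / ⟪δ, δ⟫ * ⟪δ, δ⟫) / ⟪δ, δ⟫ = -(2 * ⟪v, δ⟫ / ⟪δ, δ⟫) by
      field_simp; ring]
    module

noncomputable def rootReflection (δ : V) : V ≃ₗ[ℝ] V :=
  .ofInvolutive (rootReflectionₗ δ) (rootReflectionₗ_involutive δ)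

lemma rootReflection_apply (δ v : V) :
    rootReflection δ v = v - (2 * ⟪v, δ⟫ / ⟪δ, δ⟫) • δ :=
  rootReflectionₗ_apply δ v

lemma rootReflection_apply_eq_of_inner {δ v w : V} (k : ℝ) (hδ : δ ≠ 0)
    (h : 2 * ⟪v, δ⟫ = k * ⟪δ, δ⟫) (hw : v - k • δ = w) : rootReflection δ v = w := by
  rw [rootReflection_apply, h, mul_div_cancel_right₀ _ (inner_self_ne_zero.mpr hδ), hw]

lemma rootReflection_self {δ : V} (hδ : δ ≠ 0) : rootReflection δ δ = -δ :=
  rootReflection_apply_eq_of_inner 2 hδ rfl (by module)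

lemma rootReflection_rootReflection (δ v : V) : rootReflection δ (rootReflection δ v) = v :=
  rootReflectionₗ_involutive δ v

lemma rootReflection_mul_self (δ : V) : rootReflection δ * rootReflection δ = 1 :=
  LinearEquiv.ext (rootReflection_rootReflection δ)

lemma inner_rootReflection_rootReflection (δ v w : V) :
    ⟪rootReflection δ v, rootReflection δ w⟫ = ⟪v, w⟫ := by
  rcases eq_or_ne δ 0 with rfl | hδ
  · simp [rootReflection_apply]
  · have : ⟪δ, δ⟫ ≠ 0 := inner_self_ne_zero.mpr hδ
    simp only [rootReflection_apply, inner_sub_left, inner_sub_right, real_inner_smul_left,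
      real_inner_smul_right, real_inner_comm δ w]
    field_simp
    ring

lemma rootReflection_apply_mul {g : V ≃ₗ[ℝ] V} (hg : ∀ v w, ⟪g v, g w⟫ = ⟪v, w⟫) (δ : V) :
    rootReflection (g δ) * g = g * rootReflection δ := by
  ext v
  simp only [LinearEquiv.mul_apply, rootReflection_apply, map_sub, map_smul, hg]

lemma rootReflection_rootReflection_eq (ε δ : V) :
    rootReflection (rootReflection ε δ) =
      rootReflection ε * rootReflection δ * rootReflection ε := by
  rw [← rootReflection_apply_mul (inner_rootReflection_rootReflection ε), mul_assoc,
    rootReflection_mul_self, mul_one]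

end Reflection

namespace IsReducedCrystallographicRootSystem

variable {V : Type*} [NormedAddCommGroup V] [InnerProductSpace ℝ V] {Φ : Set V}
  {α β γ : V}

lemma rootReflection_mem (hΦ : IsReducedCrystallographicRootSystem Φ) (hα : α ∈ Φ) (hβ : β ∈ Φ) :
    rootReflection α β ∈ Φ := by
  rw [rootReflection_apply]
  exact hΦ.reflection_mem α hα β hβ

lemma neg_mem (hΦ : IsReducedCrystallographicRootSystem Φ) (hα : α ∈ Φ) : -α ∈ Φ := by
  simpa [rootReflection_self (hΦ.ne_zero α hα)] using hΦ.rootReflection_mem hα hα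

lemma two_smul_notMem (hΦ : IsReducedCrystallographicRootSystem Φ) (hα : α ∈ Φ) :
    (2 : ℝ) • α ∉ Φ := fun h => by
  rcases hΦ.reduced α hα 2 h with h | h <;> norm_num at h

lemma inner_mul_inner_lt (hΦ : IsReducedCrystallographicRootSystem Φ) (hα : α ∈ Φ)
    (hβ : β ∈ Φ) (hne : α ≠ β) (hne' : α ≠ -β) :
    ⟪α, β⟫ * ⟪α, β⟫ < ⟪α, α⟫ * ⟪β, β⟫ := by
  refine (real_inner_mul_inner_self_le α β).lt_of_ne fun h => ?_
  have hα0 := hΦ.ne_zero α hα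
  obtain ⟨r, -, hr⟩ := (norm_inner_eq_norm_iff (hΦ.ne_zero β hβ) hα0).mp <| by
    rw [Real.norm_eq_abs, ← sq_eq_sq₀ (abs_nonneg _) (by positivity), sq_abs, mul_pow,
      ← real_inner_self_eq_norm_sq, ← real_inner_self_eq_norm_sq, sq, real_inner_comm, h,
      mul_comm]
  rcases hΦ.reduced β hβ r (hr ▸ hα) with rfl | rfl
  · exact hne (by rw [hr, one_smul])
  · exact hne' (by rw [hr, neg_one_smul])

/-- Absent `G₂`, the product of the two Cartan integers of non-proportional roots is at most
`2`: it is an integer, less than `4` by Cauchy–Schwarz, and `3` only in type `G₂`. -/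
lemma exists_int_cartan (hΦ : IsReducedCrystallographicRootSystem Φ) (hG2 : HasNoG2Component Φ)
    (hα : α ∈ Φ) (hβ : β ∈ Φ) (hne : α ≠ β) (hne' : α ≠ -β) :
    ∃ p q : ℤ, p * ⟪β, β⟫ = 2 * ⟪α, β⟫ ∧ q * ⟪α, α⟫ = 2 * ⟪α, β⟫ ∧ p * q ≤ 2 := by
  have hαα : 0 < ⟪α, α⟫ := real_inner_self_pos.mpr (hΦ.ne_zero α hα)
  have hββ : 0 < ⟪β, β⟫ := real_inner_self_pos.mpr (hΦ.ne_zero β hβ)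
  obtain ⟨p, hp⟩ := hΦ.crystallographic β hβ α hα
  obtain ⟨q, hq⟩ := hΦ.crystallographic α hα β hβ
  have hpq : (p * q : ℝ) ≠ 3 := by rw [hp, hq]; exact hG2 α hα β hβ
  rw [real_inner_comm] at hq
  rw [eq_div_iff hββ.ne'] at hp
  rw [eq_div_iff hαα.ne'] at hq
  have hlt : (p * q : ℝ) < 4 := by
    have hprod : (p * q : ℝ) * (⟪α, α⟫ * ⟪β, β⟫) = 4 * (⟪α, β⟫ * ⟪α, β⟫) := by
      linear_combination (q * ⟪α, α⟫) * hp + (2 * ⟪α, β⟫) * hq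
    nlinarith [hΦ.inner_mul_inner_lt hα hβ hne hne', mul_pos hαα hββ]
  refine ⟨p, q, hp, hq, ?_⟩
  have : p * q ≠ 3 := fun h => hpq (by exact_mod_cast h)
  have : p * q < 4 := by exact_mod_cast hlt
  omega

lemma inner_lt_or_sub_mem (hΦ : IsReducedCrystallographicRootSystem Φ)
    (hG2 : HasNoG2Component Φ) (hα : α ∈ Φ) (hβ : β ∈ Φ) (hne : β ≠ α) (hne' : β ≠ -α) :
    ⟪α, β⟫ < ⟪α, α⟫ ∨ ⟪α, β⟫ = ⟪α, α⟫ ∧ α - β ∈ Φ := by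
  obtain ⟨p, q, hp, hq, hpq⟩ := hΦ.exists_int_cartan hG2 hβ hα hne hne'
  rw [real_inner_comm α β] at hp hq
  refine (lt_or_ge ⟪α, β⟫ ⟪α, α⟫).imp_right fun hle => ?_
  have hαα : 0 < ⟪α, α⟫ := real_inner_self_pos.mpr (hΦ.ne_zero α hα)
  have hββ : 0 < ⟪β, β⟫ := real_inner_self_pos.mpr (hΦ.ne_zero β hβ)
  have hp2 : 2 ≤ p := by
    have : (1 : ℝ) < p := by nlinarith
    exact_mod_cast this
  have hq1 : 1 ≤ q := by
    have : (0 : ℝ) < q := by nlinarith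
    exact_mod_cast this
  obtain ⟨rfl, rfl⟩ : p = 2 ∧ q = 1 := by constructor <;> nlinarith
  push_cast at hp hq
  refine ⟨by linarith, ?_⟩
  rw [← rootReflection_apply_eq_of_inner (v := α) (w := α - β) 1 (hΦ.ne_zero β hβ) (by linarith)
    (by module)]
  exact hΦ.rootReflection_mem hβ hα

lemma inner_nonpos_of_add_mem (hΦ : IsReducedCrystallographicRootSystem Φ)
    (hG2 : HasNoG2Component Φ) (hβ : β ∈ Φ) (hγ : γ ∈ Φ) (hβγ : β + γ ∈ Φ) :
    ⟪β, γ⟫ ≤ 0 := by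
  have hne : β + γ ≠ β := fun h => hΦ.ne_zero γ hγ (by simpa using h)
  have hne' : β + γ ≠ -β := fun h => hΦ.two_smul_notMem (hΦ.neg_mem hβ) <| by
    convert hγ using 1
    linear_combination (norm := module) -h
  have := hΦ.inner_lt_or_sub_mem hG2 hβ hβγ hne hne'
  rw [inner_add_right] at this
  by_contra! hpos
  rcases this with h | ⟨h, -⟩ <;> linarith

lemma inner_self_eq_of_add_mem (hΦ : IsReducedCrystallographicRootSystem Φ) (hβ : β ∈ Φ)
    (hγ : γ ∈ Φ) (hβγ : β + γ ∈ Φ) (h : ⟪β, γ⟫ = 0) : ⟪β, β⟫ = ⟪γ, γ⟫ := by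
  have hββ : 0 < ⟪β, β⟫ := real_inner_self_pos.mpr (hΦ.ne_zero β hβ)
  have hγγ : 0 < ⟪γ, γ⟫ := real_inner_self_pos.mpr (hΦ.ne_zero γ hγ)
  obtain ⟨n, hn⟩ := hΦ.crystallographic (β + γ) hβγ γ hγ
  simp only [inner_add_left, inner_add_right, h, real_inner_comm β γ] at hn
  rw [eq_div_iff (by positivity)] at hn
  have h0 : 0 < n := by
    have : (0 : ℝ) < n := by nlinarith
    exact_mod_cast this
  have h2 : n < 2 := by
    have : (n : ℝ) < 2 := by nlinarith
    exact_mod_cast this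
  obtain rfl : n = 1 := by omega
  push_cast at hn
  linarith

lemma inner_cases_of_add_mem (hΦ : IsReducedCrystallographicRootSystem Φ)
    (hG2 : HasNoG2Component Φ) (hβ : β ∈ Φ) (hγ : γ ∈ Φ) (hβγ : β + γ ∈ Φ) (h : ⟪β, γ⟫ < 0) :
    (2 * ⟪β, γ⟫ = -⟪β, β⟫ ∧ 2 * ⟪β, γ⟫ = -⟪γ, γ⟫) ∨
      (⟪β, γ⟫ = -⟪β, β⟫ ∧ ⟪γ, γ⟫ = 2 * ⟪β, β⟫) ∨
      (⟪β, γ⟫ = -⟪γ, γ⟫ ∧ ⟪β, β⟫ = 2 * ⟪γ, γ⟫) := by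
  have hne : β ≠ γ := by
    rintro rfl
    exact hΦ.two_smul_notMem hβ (by rwa [two_smul])
  have hne' : β ≠ -γ := by
    rintro rfl
    exact hΦ.ne_zero _ hβγ (neg_add_cancel γ)
  have hββ : 0 < ⟪β, β⟫ := real_inner_self_pos.mpr (hΦ.ne_zero β hβ)
  have hγγ : 0 < ⟪γ, γ⟫ := real_inner_self_pos.mpr (hΦ.ne_zero γ hγ)
  obtain ⟨p, q, hp, hq, hpq⟩ := hΦ.exists_int_cartan hG2 hβ hγ hne hne'
  have hp1 : p ≤ -1 := by
    have : (p : ℝ) < 0 := by nlinarith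
    exact Int.le_sub_one_of_lt (by exact_mod_cast this)
  have hq1 : q ≤ -1 := by
    have : (q : ℝ) < 0 := by nlinarith
    exact Int.le_sub_one_of_lt (by exact_mod_cast this)
  have hp2 : -2 ≤ p := by nlinarith
  have hq2 : -2 ≤ q := by nlinarith
  interval_cases p <;> interval_cases q <;> push_cast at hp hq
  · norm_num at hpq
  · exact .inr (.inr ⟨by linarith, by linarith⟩)
  · exact .inr (.inl ⟨by linarith, by linarith⟩)
  · exact .inl ⟨by linarith, by linarith⟩

end IsReducedCrystallographicRootSystem

section WeylGroup

variable {V : Type*} [NormedAddCommGroup V] [InnerProductSpace ℝ V] {Φ : Set V}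

lemma rootReflection_inv (δ : V) : (rootReflection δ)⁻¹ = rootReflection δ :=
  inv_eq_of_mul_eq_one_left (rootReflection_mul_self δ)

lemma weylGroup_eq_closure (Φ : Set V) :
    weylGroup Φ = Subgroup.closure (rootReflection '' Φ) := by
  refine congrArg Subgroup.closure (Set.ext fun g => ⟨?_, ?_⟩)
  · rintro ⟨α, hα, hg⟩
    exact ⟨α, hα, LinearEquiv.ext fun v => by rw [rootReflection_apply, hg]⟩
  · rintro ⟨α, hα, rfl⟩
    exact ⟨α, hα, rootReflection_apply α⟩

lemma rootReflection_mem_weylGroup {δ : V} (hδ : δ ∈ Φ) : rootReflection δ ∈ weylGroup Φ := by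
  rw [weylGroup_eq_closure]
  exact Subgroup.subset_closure ⟨δ, hδ, rfl⟩

lemma weylGroup_induction {p : (V ≃ₗ[ℝ] V) → Prop}
    (reflection : ∀ α ∈ Φ, p (rootReflection α)) (one : p 1)
    (mul : ∀ x y, p x → p y → p (x * y)) {g : V ≃ₗ[ℝ] V} (hg : g ∈ weylGroup Φ) : p g := by
  rw [weylGroup_eq_closure] at hg
  induction hg using Subgroup.closure_induction'' with
  | mem _ h => obtain ⟨α, hα, rfl⟩ := h; exact reflection α hα
  | inv_mem _ h => obtain ⟨α, hα, rfl⟩ := h; rw [rootReflection_inv]; exact reflection α hα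
  | one => exact one
  | mul x y _ _ hx hy => exact mul x y hx hy

lemma inner_apply_apply_of_mem_weylGroup {g : V ≃ₗ[ℝ] V} (hg : g ∈ weylGroup Φ) (v w : V) :
    ⟪g v, g w⟫ = ⟪v, w⟫ := by
  refine weylGroup_induction (p := fun g => ∀ v w, ⟪g v, g w⟫ = ⟪v, w⟫)
    (fun α _ => inner_rootReflection_rootReflection α) (fun _ _ => rfl) ?_ hg v w
  intro x y hx hy v w
  rw [LinearEquiv.mul_apply, LinearEquiv.mul_apply, hx, hy]

lemma IsReducedCrystallographicRootSystem.apply_mem_of_mem_weylGroup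
    (hΦ : IsReducedCrystallographicRootSystem Φ) {g : V ≃ₗ[ℝ] V} (hg : g ∈ weylGroup Φ)
    {β : V} (hβ : β ∈ Φ) : g β ∈ Φ := by
  refine weylGroup_induction (p := fun g => ∀ β ∈ Φ, g β ∈ Φ)
    (fun α hα β hβ => hΦ.rootReflection_mem hα hβ) (fun _ h => h) ?_ hg β hβ
  exact fun x y hx hy β hβ => hx _ (hy β hβ)

noncomputable def weylReflection {δ : V} (hδ : δ ∈ Φ) : weylGroup Φ :=
  ⟨rootReflection δ, rootReflection_mem_weylGroup hδ⟩

@[simp]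
lemma coe_weylReflection {δ : V} (hδ : δ ∈ Φ) :
    (weylReflection hδ : V ≃ₗ[ℝ] V) = rootReflection δ :=
  rfl

lemma isReflectionIn_weylReflection {δ : V} (hδ : δ ∈ Φ) :
    IsReflectionIn (weylReflection hδ) δ :=
  ⟨hδ, rootReflection_apply δ⟩

lemma IsReflectionIn.eq_weylReflection {t : weylGroup Φ} {δ : V} (ht : IsReflectionIn t δ) :
    t = weylReflection ht.1 :=
  Subtype.ext (LinearEquiv.ext fun v => (ht.2 v).trans (rootReflection_apply δ v).symm)

lemma weylReflection_mul_self {δ : V} (hδ : δ ∈ Φ) :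
    weylReflection hδ * weylReflection hδ = 1 :=
  Subtype.ext (rootReflection_mul_self δ)

lemma weylReflection_rootReflection {ε δ : V} (hε : ε ∈ Φ) (hδ : δ ∈ Φ)
    (h : rootReflection ε δ ∈ Φ) :
    weylReflection h = weylReflection hε * weylReflection hδ * weylReflection hε :=
  Subtype.ext (rootReflection_rootReflection_eq ε δ)

end WeylGroup

namespace IsPositiveSystem

variable {V : Type*} [NormedAddCommGroup V] [InnerProductSpace ℝ V] {Φ Pos : Set V} {a b : V}

lemma neg_notMem (hPos : IsPositiveSystem Φ Pos) (ha : a ∈ Pos) : -a ∉ Pos := by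
  obtain ⟨-, f, -, rfl⟩ := hPos
  simp only [Set.mem_ofPred_eq, map_neg] at ha ⊢
  intro h
  linarith [ha.2, h.2]

lemma neg_mem_of_notMem (hΦ : IsReducedCrystallographicRootSystem Φ)
    (hPos : IsPositiveSystem Φ Pos) (ha : a ∈ Φ) (h : a ∉ Pos) : -a ∈ Pos := by
  obtain ⟨-, f, hf, rfl⟩ := hPos
  simp only [Set.mem_ofPred_eq, map_neg, not_and, not_lt] at h ⊢
  exact ⟨hΦ.neg_mem ha, neg_pos.mpr ((h ha).lt_of_ne (hf a ha))⟩

lemma add_mem (hPos : IsPositiveSystem Φ Pos) (ha : a ∈ Pos) (hb : b ∈ Pos) (hab : a + b ∈ Φ) :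
    a + b ∈ Pos := by
  obtain ⟨-, f, -, rfl⟩ := hPos
  simp only [Set.mem_ofPred_eq, map_add] at ha hb ⊢
  exact ⟨hab, add_pos ha.2 hb.2⟩

/-- `a ↦ s_η a` (if positive) or `a ↦ a` (otherwise) injects the inversions of `g` into those of
`g ∘ s_η` other than `η`. -/
lemma ncard_inversions_lt (hΦ : IsReducedCrystallographicRootSystem Φ)
    (hPos : IsPositiveSystem Φ Pos) {g : V ≃ₗ[ℝ] V} (hg : ∀ a ∈ Φ, g a ∈ Φ) {η : V}
    (hη : η ∈ Pos) (hgη : g η ∈ Pos) :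
    {a ∈ Pos | g a ∉ Pos}.ncard < {a ∈ Pos | g (rootReflection η a) ∉ Pos}.ncard := by
  classical
  have ⟨hsub, f, hf, hPosf⟩ := hPos
  have hmem : ∀ {b}, b ∈ Pos ↔ b ∈ Φ ∧ 0 < f b := by simp [hPosf]
  have hneg : ∀ {b}, b ∈ Φ → b ∉ Pos → f b < 0 := fun hb h =>
    (not_lt.mp fun h' => h (hmem.mpr ⟨hb, h'⟩)).lt_of_ne (hf _ hb)
  have hη0 : η ≠ 0 := hΦ.ne_zero η (hsub hη)
  set s := rootReflection η
  set c : V → ℝ := fun a => 2 * ⟪a, η⟫ / ⟪η, η⟫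
  have hs : ∀ a, s a = a - c a • η := rootReflection_apply η
  set N := {a ∈ Pos | g a ∉ Pos}
  set N' := {a ∈ Pos | g (s a) ∉ Pos}
  have hηN' : η ∈ N' :=
    ⟨hη, by rw [rootReflection_self hη0, map_neg]; exact hPos.neg_notMem hgη⟩
  let φ : V → V := fun a => if s a ∈ Pos then s a else a
  have hmaps : ∀ a ∈ N, φ a ∈ N' \ {η} := by
    rintro a ⟨ha, hga⟩
    by_cases hsa : s a ∈ Pos
    · simp only [φ, if_pos hsa]
      refine ⟨⟨hsa, by rwa [rootReflection_rootReflection]⟩, fun h => hPos.neg_notMem hη ?_⟩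
      have : a = -η := by
        simpa [s, rootReflection_rootReflection, rootReflection_self hη0] using congrArg s h
      exact this ▸ ha
    · simp only [φ, if_neg hsa]
      refine ⟨⟨ha, fun h => ?_⟩, fun h => hga (Set.mem_singleton_iff.mp h ▸ hgη)⟩
      have hfsa := hneg (hΦ.rootReflection_mem (hsub hη) (hsub ha)) hsa
      have hfgsa := (hmem.mp h).2
      rw [hs, map_sub, map_smul, smul_eq_mul] at hfsa
      rw [hs, map_sub, map_smul, map_sub, map_smul, smul_eq_mul] at hfgsa
      have hc : 0 < c a := by nlinarith [(hmem.mp ha).2, (hmem.mp hη).2]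
      nlinarith [(hmem.mp hgη).2, hneg (hg a (hsub ha)) hga]
  have hinj : Set.InjOn φ N := by
    intro a ha a' ha' h
    by_cases hsa : s a ∈ Pos <;> by_cases hsa' : s a' ∈ Pos <;>
      simp only [φ, hsa, hsa', ↓reduceIte] at h
    · exact s.injective h
    · exact absurd (by rw [← h, rootReflection_rootReflection]; exact ha.1) hsa'
    · exact absurd (by rw [h, rootReflection_rootReflection]; exact ha'.1) hsa
    · exact h
  have hN'fin : N'.Finite := hΦ.finite.subset fun a ha => hsub ha.1
  calc N.ncard ≤ (N' \ {η}).ncard := Set.ncard_le_ncard_of_injOn φ hmaps hinj (hN'fin.sdiff)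
    _ < N'.ncard := Set.ncard_sdiff_singleton_lt_of_mem hηN' hN'fin

end IsPositiveSystem

section Bruhat

variable {V : Type*} [NormedAddCommGroup V] [InnerProductSpace ℝ V] {Φ Pos : Set V}
  {β γ δ ε ζ η : V}

lemma bruhatLE_mul_weylReflection (hΦ : IsReducedCrystallographicRootSystem Φ)
    (hPos : IsPositiveSystem Φ Pos) (x : weylGroup Φ) (hη : η ∈ Pos)
    (hxη : (x : V ≃ₗ[ℝ] V) η ∈ Pos) : bruhatLE Pos x (x * weylReflection (hPos.1 hη)) := by
  have hxηΦ := hPos.1 hxη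
  refine .single ⟨weylReflection hxηΦ, ⟨_, isReflectionIn_weylReflection hxηΦ⟩,
    Subtype.ext (rootReflection_apply_mul (inner_apply_apply_of_mem_weylGroup x.2) η).symm, ?_⟩
  exact hPos.ncard_inversions_lt hΦ (fun a ha => hΦ.apply_mem_of_mem_weylGroup x.2 ha) hη hxη

/-- `s_δ ≤ s_δ s_ε ≤ s_δ s_ε s_δ = s_ζ`. -/
lemma bruhatLE_weylReflection_of_rootReflection_eq (hΦ : IsReducedCrystallographicRootSystem Φ)
    (hPos : IsPositiveSystem Φ Pos) (hδ : δ ∈ Pos) (hε : ε ∈ Pos) (hζ : ζ ∈ Pos)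
    (h : rootReflection δ ε = ζ) (h' : rootReflection δ (rootReflection ε δ) ∈ Pos) :
    bruhatLE Pos (weylReflection (hPos.1 hδ)) (weylReflection (hPos.1 hζ)) := by
  subst h
  rw [weylReflection_rootReflection (hPos.1 hδ) (hPos.1 hε)]
  exact (bruhatLE_mul_weylReflection hΦ hPos _ hε hζ).trans
    (bruhatLE_mul_weylReflection hΦ hPos _ hδ h')

/-- `s_δ ≤ s_δ s_η = s_ε s_δ ≤ s_ε s_δ s_ε = s_ζ`, where `η = s_δ ε`. -/
lemma bruhatLE_weylReflection_of_rootReflection_eq' (hΦ : IsReducedCrystallographicRootSystem Φ)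
    (hPos : IsPositiveSystem Φ Pos) (hδ : δ ∈ Pos) (hε : ε ∈ Pos) (hζ : ζ ∈ Pos)
    (h : rootReflection ε δ = ζ) (hη : rootReflection δ ε ∈ Pos)
    (h' : rootReflection ε (rootReflection δ ε) ∈ Pos) :
    bruhatLE Pos (weylReflection (hPos.1 hδ)) (weylReflection (hPos.1 hζ)) := by
  subst h
  have step := bruhatLE_mul_weylReflection hΦ hPos (weylReflection (hPos.1 hδ)) hη
    (by rwa [coe_weylReflection, rootReflection_rootReflection])
  rw [weylReflection_rootReflection (hPos.1 hδ) (hPos.1 hε), ← mul_assoc, ← mul_assoc,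
    weylReflection_mul_self, one_mul] at step
  rw [weylReflection_rootReflection (hPos.1 hε) (hPos.1 hδ)]
  exact step.trans (bruhatLE_mul_weylReflection hΦ hPos _ hε h')

lemma bruhatLE_weylReflection_add_of_inner_neg (hΦ : IsReducedCrystallographicRootSystem Φ)
    (hPos : IsPositiveSystem Φ Pos) (hG2 : HasNoG2Component Φ) (hβ : β ∈ Pos) (hγ : γ ∈ Pos)
    (hβγ : β + γ ∈ Pos) (h : ⟪β, γ⟫ < 0) :
    bruhatLE Pos (weylReflection (hPos.1 hγ)) (weylReflection (hPos.1 hβγ)) := by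
  have hβ0 := hΦ.ne_zero β (hPos.1 hβ)
  have hγ0 := hΦ.ne_zero γ (hPos.1 hγ)
  have hsγβ (k : ℝ) (hk : 2 * ⟪β, γ⟫ = k * ⟪γ, γ⟫) : rootReflection γ β = β - k • γ :=
    rootReflection_apply_eq_of_inner k hγ0 hk rfl
  have hsβγ (k : ℝ) (hk : 2 * ⟪β, γ⟫ = k * ⟪β, β⟫) : rootReflection β γ = γ - k • β :=
    rootReflection_apply_eq_of_inner k hβ0 (by rwa [real_inner_comm]) rfl
  rcases hΦ.inner_cases_of_add_mem hG2 (hPos.1 hβ) (hPos.1 hγ) (hPos.1 hβγ) h with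
    ⟨h1, h2⟩ | ⟨h1, h2⟩ | ⟨h1, h2⟩
  · refine bruhatLE_weylReflection_of_rootReflection_eq hΦ hPos hγ hβ hβγ
      (by rw [hsγβ (-1) (by linarith)]; module) ?_
    rw [hsβγ (-1) (by linarith), rootReflection_apply_eq_of_inner 1 hγ0 (w := β)
      (by simp only [inner_sub_left, real_inner_smul_left]; linarith) (by module)]
    exact hβ
  · have hsβγ' : rootReflection β γ = β + γ + β := by rw [hsβγ (-2) (by linarith)]; module
    refine bruhatLE_weylReflection_of_rootReflection_eq hΦ hPos hγ hβ hβγ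
      (by rw [hsγβ (-1) (by linarith)]; module) ?_
    rw [hsβγ', rootReflection_apply_eq_of_inner 0 hγ0 (w := β + γ + β)
      (by simp only [inner_add_left]; linarith) (by module)]
    exact hPos.add_mem hβγ hβ (hsβγ' ▸ hΦ.rootReflection_mem (hPos.1 hβ) (hPos.1 hγ))
  · have hsγβ' : rootReflection γ β = β + γ + γ := by rw [hsγβ (-2) (by linarith)]; module
    have hη : rootReflection γ β ∈ Pos :=
      hsγβ' ▸ hPos.add_mem hβγ hγ (hsγβ' ▸ hΦ.rootReflection_mem (hPos.1 hγ) (hPos.1 hβ))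
    refine bruhatLE_weylReflection_of_rootReflection_eq' hΦ hPos hγ hβ hβγ
      (by rw [hsβγ (-1) (by linarith)]; module) hη ?_
    rwa [hsγβ', rootReflection_apply_eq_of_inner 0 hβ0 (w := β + γ + γ)
      (by simp only [inner_add_left, real_inner_comm β γ]; linarith) (by module), ← hsγβ']

lemma bruhatLE_weylReflection_add_of_inner_eq_zero (hΦ : IsReducedCrystallographicRootSystem Φ)
    (hPos : IsPositiveSystem Φ Pos) (hβ : β ∈ Pos) (hγ : γ ∈ Pos) (hβγ : β + γ ∈ Pos)
    (h : ⟪β, γ⟫ = 0) :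
    bruhatLE Pos (weylReflection (hPos.1 hγ)) (weylReflection (hPos.1 hβγ)) ∨
      ∃ hθ : γ - β ∈ Pos,
        bruhatLE Pos (weylReflection (hPos.1 hθ)) (weylReflection (hPos.1 hβγ)) := by
  have hβ0 := hΦ.ne_zero β (hPos.1 hβ)
  have hγ0 := hΦ.ne_zero γ (hPos.1 hγ)
  have hlen := hΦ.inner_self_eq_of_add_mem (hPos.1 hβ) (hPos.1 hγ) (hPos.1 hβγ) h
  have hθ : β - γ ∈ Φ := by
    rw [← rootReflection_apply_eq_of_inner (v := β + γ) (w := β - γ) 2 hγ0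
      (by simp only [inner_add_left]; linarith) (by module)]
    exact hΦ.rootReflection_mem (hPos.1 hγ) (hPos.1 hβγ)
  have hθ0 := hΦ.ne_zero _ hθ
  by_cases hθP : β - γ ∈ Pos
  · refine .inl (bruhatLE_weylReflection_of_rootReflection_eq hΦ hPos hγ hθP hβγ
      (rootReflection_apply_eq_of_inner (-2) hγ0
        (by simp only [inner_sub_left]; linarith) (by module)) ?_)
    rw [rootReflection_apply_eq_of_inner (-1) hθ0 (w := β)
        (by simp only [inner_sub_left, inner_sub_right, real_inner_comm β γ]; linarith)
        (by module),
      rootReflection_apply_eq_of_inner 0 hγ0 (by linarith) (by module)]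
    exact hβ
  · have hθ' : γ - β ∈ Pos := neg_sub β γ ▸ hPos.neg_mem_of_notMem hΦ hθ hθP
    refine .inr ⟨hθ', bruhatLE_weylReflection_of_rootReflection_eq' hΦ hPos hθ' hβ hβγ
      (rootReflection_apply_eq_of_inner (-2) hβ0
        (by simp only [inner_sub_left, real_inner_comm β γ]; linarith) (by module)) ?_ ?_⟩
    · rwa [rootReflection_apply_eq_of_inner (-1) (hΦ.ne_zero _ (hPos.1 hθ')) (w := γ)
        (by simp only [inner_sub_left, inner_sub_right, real_inner_comm β γ]; linarith)
        (by module)]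
    · rwa [rootReflection_apply_eq_of_inner (-1) (hΦ.ne_zero _ (hPos.1 hθ')) (w := γ)
        (by simp only [inner_sub_left, inner_sub_right, real_inner_comm β γ]; linarith)
        (by module), rootReflection_apply_eq_of_inner 0 hβ0 (w := γ)
        (by rw [real_inner_comm]; linarith) (by module)]

end Bruhat

lemma convex_lexHalfspace {E : Type*} [AddCommGroup E] [Module ℝ E] (g h : E →ₗ[ℝ] ℝ)
    (a b : ℝ) : Convex ℝ {v | g v < a ∨ g v = a ∧ h v < b} := by
  intro x hx y hy s t hs ht hst
  simp only [Set.mem_ofPred_eq, map_add, map_smul, smul_eq_mul] at hx hy ⊢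
  rcases hs.eq_or_lt with rfl | hs
  · simpa [(zero_add t).symm.trans hst] using hy
  rcases ht.eq_or_lt with rfl | ht
  · simpa [(add_zero s).symm.trans hst] using hx
  have hconv (c : ℝ) : c = s * c + t * c := by rw [← add_mul, hst, one_mul]
  have hlt {u u' c : ℝ} (hu : u ≤ c) (hu' : u' ≤ c) (hlt : u < c ∨ u' < c) :
      s * u + t * u' < c := by
    rcases hlt with h | h
    · nlinarith [hconv c]
    · nlinarith [hconv c]
  rcases hx with hx | ⟨hx, hx'⟩ <;> rcases hy with hy | ⟨hy, hy'⟩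
  · exact .inl (hlt hx.le hy.le (.inl hx))
  · exact .inl (hlt hx.le hy.le (.inl hx))
  · exact .inl (hlt hx.le hy.le (.inr hy))
  · exact .inr ⟨by rw [hx, hy, ← hconv], hlt hx'.le hy'.le (.inl hx')⟩

lemma IsPositiveSystem.mem_of_mem_convexHull {V : Type*} [NormedAddCommGroup V]
    [InnerProductSpace ℝ V] {Φ Pos E : Set V} (hΦ : IsReducedCrystallographicRootSystem Φ)
    (hPos : IsPositiveSystem Φ Pos) (hG2 : HasNoG2Component Φ) (hE : E ⊆ Pos)
    (hsub : ∀ α ∈ E, ∀ β ∈ Pos, α - β ∈ Pos → α - β ∈ E) {γ : V} (hγ : γ ∈ Pos)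
    (hγE : γ ∈ convexHull ℝ E) : γ ∈ E := by
  obtain ⟨f, hf⟩ : ∃ f : V →ₗ[ℝ] ℝ, ∀ a ∈ Pos, 0 < f a := by
    obtain ⟨-, f, -, hPosf⟩ := hPos
    exact ⟨f, fun a ha => (hPosf ▸ ha).2⟩
  by_contra hγE'
  have hH : E ⊆ {v | ⟪γ, v⟫ < ⟪γ, γ⟫ ∨ ⟪γ, v⟫ = ⟪γ, γ⟫ ∧ f v < f γ} := by
    intro z hz
    have hzγ : z - γ ∉ Pos := fun h =>
      hγE' (sub_sub_cancel z γ ▸ hsub z hz _ h ((sub_sub_cancel z γ).symm ▸ hγ))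
    refine (hΦ.inner_lt_or_sub_mem hG2 (hPos.1 hγ) (hPos.1 (hE hz)) (fun h => hγE' (h ▸ hz))
      (fun h => hPos.neg_notMem hγ (h ▸ hE hz))).imp_right fun ⟨heq, hmem⟩ => ⟨heq, ?_⟩
    have : γ - z ∈ Pos := by
      by_contra h
      exact hzγ (neg_sub γ z ▸ hPos.neg_mem_of_notMem hΦ hmem h)
    linarith [hf _ this, map_sub f γ z]
  have := convexHull_min hH (convex_lexHalfspace (innerₛₗ ℝ γ) f _ _) hγE
  simp at this

theorem closed_under_subtraction_iff_convexHull_general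
    {V : Type*} [NormedAddCommGroup V] [InnerProductSpace ℝ V]
    {Φ Pos : Set V} (hΦ : IsReducedCrystallographicRootSystem Φ)
    (hPos : IsPositiveSystem Φ Pos) (hG2 : HasNoG2Component Φ)
    (w : weylGroup Φ) :
    (∀ α ∈ ESet Pos w, ∀ β ∈ Pos, α - β ∈ Pos → α - β ∈ ESet Pos w)
      ↔ Pos ∩ convexHull ℝ (ESet Pos w) ⊆ ESet Pos w := by
  refine ⟨fun hsub γ ⟨hγ, hγE⟩ =>
    hPos.mem_of_mem_convexHull hΦ hG2 (fun _ h => h.1) hsub hγ hγE, fun hconv α hα β hβ hγ => ?_⟩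
  obtain ⟨hα, t, ht, htw⟩ := hα
  rw [ht.eq_weylReflection] at htw
  generalize hγα : α - β = γ at hγ ⊢
  obtain rfl : α = β + γ := by rw [← hγα]; abel
  have hmemE {δ : V} (hδ : δ ∈ Pos)
      (h : bruhatLE Pos (weylReflection (hPos.1 hδ)) (weylReflection (hPos.1 hα))) :
      δ ∈ ESet Pos w :=
    ⟨hδ, _, isReflectionIn_weylReflection _, h.trans htw⟩
  rcases (hΦ.inner_nonpos_of_add_mem hG2 (hPos.1 hβ) (hPos.1 hγ) (hPos.1 hα)).lt_or_eq with h | h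
  · exact hmemE hγ (bruhatLE_weylReflection_add_of_inner_neg hΦ hPos hG2 hβ hγ hα h)
  rcases bruhatLE_weylReflection_add_of_inner_eq_zero hΦ hPos hβ hγ hα h with h | ⟨hθ, h⟩
  · exact hmemE hγ h
  refine hconv ⟨hγ, segment_subset_convexHull (hmemE hα .refl) (hmemE hθ h) ?_⟩
  exact ⟨1 / 2, 1 / 2, by norm_num, by norm_num, by norm_num, by module⟩

theorem closed_under_subtraction_iff_convexHull
    {V : Type*} [NormedAddCommGroup V] [InnerProductSpace ℝ V] [FiniteDimensional ℝ V]
    {Φ Pos : Set V} (hΦ : IsReducedCrystallographicRootSystem Φ)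
    (hPos : IsPositiveSystem Φ Pos) (hG2 : HasNoG2Component Φ)
    (w : weylGroup Φ) (hpal : PoincarePalindromic Pos w) :
    (∀ α ∈ ESet Pos w, ∀ β ∈ Pos, α - β ∈ Pos → α - β ∈ ESet Pos w)
      ↔ Pos ∩ convexHull ℝ (ESet Pos w) ⊆ ESet Pos w :=
  closed_under_subtraction_iff_convexHull_general hΦ hPos hG2 w
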